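/- There exists a constant C > 0 such that for all t ≥ 1, all ε ∈ (0, 1], all d₀ ≥ ε, and all ψ₀ ∈ ℝ, one has ∫_{max(d₀ − ε, 0)}^{d₀ + ε} ∫_{{ψ : |ψ − ψ₀| ≤ ε/d₀}} (t² − u²)₊^{−1/2} · u dψ du ≤ C t^{−1/2}. -/

import Mathlib

open MeasureTheory Real

/-- `(x)₊^{-1/2}`: equals `x^{-1/2}` for `x > 0` and `0` for `x ≤ 0`. -/
noncomputable def negHalfPos (x : ℝ) : ℝ := if 0 < x then x ^ (-(1/2) : ℝ) else 0

/-!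
The angular integral is the constant `negHalfPos (t² - u²)` times the width `2ε/d₀`, and on the
radial range `u ≤ d₀ + ε ≤ 2d₀` this width times `u` is at most `4ε`. Factoring
`t² - u² = (t - u)(t + u)` and using `(t + u)^{-1/2} ≤ t^{-1/2}` leaves
`∫ (t - u)₊^{-1/2} du` over an interval of length `2ε`, which is at most `2√(2ε)`.
-/

namespace Real

-- `Real.rpow` of a negative base is `exp (log x * y) * cos (y * π)`, and `cos (-π/2) = 0`.
lemma rpow_neg_half_of_nonpos {x : ℝ} (hx : x ≤ 0) : x ^ (-(1/2) : ℝ) = 0 := by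
  rcases hx.lt_or_eq with hx | rfl
  · rw [rpow_def_of_neg hx, show (-(1/2) : ℝ) * π = -(π / 2) by ring, cos_neg, cos_pi_div_two,
      mul_zero]
  · exact zero_rpow (by norm_num)

lemma rpow_neg_half_nonneg (x : ℝ) : 0 ≤ x ^ (-(1/2) : ℝ) := by
  rcases le_or_gt x 0 with hx | hx
  · rw [rpow_neg_half_of_nonpos hx]
  · exact rpow_nonneg hx.le _

lemma sqrt_sub_sqrt_le_sqrt_sub {x y : ℝ} (h : x ≤ y) : √y - √x ≤ √(y - x) := by
  have hx : x ≤ √x ^ 2 := by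
    rcases le_or_gt x 0 with hx | hx
    · exact hx.trans (sq_nonneg _)
    · exact (sq_sqrt hx.le).ge
  have : √y ≤ √(y - x) + √x :=
    calc √y ≤ √((√(y - x) + √x) ^ 2) := sqrt_le_sqrt (by
          nlinarith [sq_sqrt (sub_nonneg.2 h), sqrt_nonneg (y - x), sqrt_nonneg x])
      _ = √(y - x) + √x := sqrt_sq (by positivity)
  linarith

lemma rpow_neg_half_sq_sub_sq_le {t u : ℝ} (ht : 0 < t) (hu : 0 ≤ u) :
    (t ^ 2 - u ^ 2) ^ (-(1/2) : ℝ) ≤ t ^ (-(1/2) : ℝ) * (t - u) ^ (-(1/2) : ℝ) := by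
  rcases lt_or_ge u t with hut | htu
  · rw [show t ^ 2 - u ^ 2 = (t - u) * (t + u) by ring, mul_rpow (by linarith) (by linarith),
      mul_comm]
    exact mul_le_mul_of_nonneg_right (rpow_le_rpow_of_nonpos ht (by linarith) (by norm_num))
      (rpow_neg_half_nonneg _)
  · rw [rpow_neg_half_of_nonpos (by nlinarith)]
    exact mul_nonneg (rpow_neg_half_nonneg _) (rpow_neg_half_nonneg _)

end Real

open Real

lemma negHalfPos_eq_rpow (x : ℝ) : negHalfPos x = x ^ (-(1/2) : ℝ) := by
  unfold negHalfPos
  split_ifs with hx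
  · rfl
  · exact (rpow_neg_half_of_nonpos (not_lt.1 hx)).symm

lemma negHalfPos_nonneg (x : ℝ) : 0 ≤ negHalfPos x :=
  negHalfPos_eq_rpow x ▸ rpow_neg_half_nonneg x

lemma intervalIntegrable_sub_rpow (t : ℝ) {r : ℝ} (hr : -1 < r) (a b : ℝ) :
    IntervalIntegrable (fun u => (t - u) ^ r) volume a b := by
  simpa using
    ((intervalIntegral.intervalIntegrable_rpow' hr (a := t - b) (b := t - a)).comp_sub_left t).symm

lemma integral_sub_rpow_neg_half_le (t : ℝ) {a b : ℝ} (hab : a ≤ b) :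
    ∫ u in a..b, (t - u) ^ (-(1/2) : ℝ) ≤ 2 * √(b - a) := by
  rw [intervalIntegral.integral_comp_sub_left (fun s => s ^ (-(1/2) : ℝ)) t,
    integral_rpow (Or.inl (by norm_num)), show (-(1/2) + 1 : ℝ) = 1/2 by norm_num,
    ← sqrt_eq_rpow, ← sqrt_eq_rpow]
  have := sqrt_sub_sqrt_le_sqrt_sub (show t - b ≤ t - a by linarith)
  rw [show t - a - (t - b) = b - a by ring] at this
  linarith

lemma setIntegral_abs_sub_le_const (c x₀ : ℝ) {r : ℝ} (hr : 0 ≤ r) :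
    ∫ _ in {x : ℝ | |x - x₀| ≤ r}, c = 2 * r * c := by
  have : {x : ℝ | |x - x₀| ≤ r} = Metric.closedBall x₀ r := by
    ext x; simp [Metric.mem_closedBall, Real.dist_eq]
  rw [this, setIntegral_const, volume_real_closedBall hr, smul_eq_mul]

lemma angular_mul_negHalfPos_sq_sub_sq_mul_le {t ε d₀ u : ℝ} (ht : 0 < t) (hε : 0 < ε)
    (hd₀ : ε ≤ d₀) (hu : 0 ≤ u) (hud : u ≤ d₀ + ε) :
    2 * (ε / d₀) * negHalfPos (t ^ 2 - u ^ 2) * u ≤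
      4 * ε * t ^ (-(1/2) : ℝ) * (t - u) ^ (-(1/2) : ℝ) := by
  have hwidth : 2 * (ε / d₀) * u ≤ 4 * ε := by
    rw [mul_assoc, div_mul_eq_mul_div, ← mul_div_assoc, div_le_iff₀ (hε.trans_le hd₀)]
    nlinarith
  rw [negHalfPos_eq_rpow]
  calc 2 * (ε / d₀) * (t ^ 2 - u ^ 2) ^ (-(1/2) : ℝ) * u
      = 2 * (ε / d₀) * u * (t ^ 2 - u ^ 2) ^ (-(1/2) : ℝ) := by ring
    _ ≤ 4 * ε * (t ^ 2 - u ^ 2) ^ (-(1/2) : ℝ) :=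
        mul_le_mul_of_nonneg_right hwidth (rpow_neg_half_nonneg _)
    _ ≤ 4 * ε * (t ^ (-(1/2) : ℝ) * (t - u) ^ (-(1/2) : ℝ)) := by
        gcongr; exact rpow_neg_half_sq_sub_sq_le ht hu
    _ = 4 * ε * t ^ (-(1/2) : ℝ) * (t - u) ^ (-(1/2) : ℝ) := by ring

/-- Annular-sector estimate from the proof of Lemma 3.2 in the case `t ≥ 1`. -/
theorem stmt_17 : ∃ C > (0:ℝ), ∀ t : ℝ, 1 ≤ t → ∀ ε : ℝ, 0 < ε → ε ≤ 1 →
    ∀ d₀ : ℝ, ε ≤ d₀ → ∀ ψ₀ : ℝ,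
    (∫ u in Set.Ioc (max (d₀ - ε) 0) (d₀ + ε),
      (∫ ψ in {ψ : ℝ | |ψ - ψ₀| ≤ ε / d₀}, negHalfPos (t^2 - u^2)) * u)
      ≤ C * t ^ (-(1/2) : ℝ) := by
  refine ⟨8 * √2, by positivity, fun t ht ε hε hε1 d₀ hd₀ ψ₀ => ?_⟩
  have ht₀ : 0 < t := one_pos.trans_le ht
  have hd₀' : 0 < d₀ := hε.trans_le hd₀
  have hab : d₀ - ε ≤ d₀ + ε := by linarith
  simp_rw [setIntegral_abs_sub_le_const _ ψ₀ (div_nonneg hε.le hd₀'.le),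
    max_eq_left (sub_nonneg.2 hd₀)]
  have hbound : IntegrableOn (fun u => 4 * ε * t ^ (-(1/2) : ℝ) * (t - u) ^ (-(1/2) : ℝ))
      (Set.Ioc (d₀ - ε) (d₀ + ε)) :=
    ((intervalIntegrable_iff_integrableOn_Ioc_of_le hab).1
      (intervalIntegrable_sub_rpow t (by norm_num) _ _)).const_mul _
  have hu₀ : ∀ u ∈ Set.Ioc (d₀ - ε) (d₀ + ε), 0 ≤ u := fun u hu => by linarith [hu.1]
  calc ∫ u in Set.Ioc (d₀ - ε) (d₀ + ε), 2 * (ε / d₀) * negHalfPos (t ^ 2 - u ^ 2) * u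
      ≤ ∫ u in Set.Ioc (d₀ - ε) (d₀ + ε), 4 * ε * t ^ (-(1/2) : ℝ) * (t - u) ^ (-(1/2) : ℝ) := by
        exact integral_mono_of_nonneg (ae_restrict_of_forall_mem measurableSet_Ioc fun u hu =>
          mul_nonneg (mul_nonneg (by positivity) (negHalfPos_nonneg _)) (hu₀ u hu))
          hbound (ae_restrict_of_forall_mem measurableSet_Ioc fun u hu =>
            angular_mul_negHalfPos_sq_sub_sq_mul_le ht₀ hε hd₀ (hu₀ u hu) hu.2)
    _ = 4 * ε * t ^ (-(1/2) : ℝ) * ∫ u in (d₀ - ε)..(d₀ + ε), (t - u) ^ (-(1/2) : ℝ) := by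
        rw [integral_const_mul, intervalIntegral.integral_of_le hab]
    _ ≤ 4 * ε * t ^ (-(1/2) : ℝ) * (2 * √(2 * ε)) := by
        gcongr
        rw [show 2 * ε = d₀ + ε - (d₀ - ε) by ring]
        exact integral_sub_rpow_neg_half_le t hab
    _ ≤ 8 * √2 * t ^ (-(1/2) : ℝ) := by
        have : √(2 * ε) ≤ √2 := sqrt_le_sqrt (by linarith)
        have := rpow_neg_half_nonneg t
        have : ε * √(2 * ε) ≤ √2 := by nlinarith [sqrt_nonneg (2 * ε)]
        nlinarith
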